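/- arXiv:2204.07665 — 3 statements merged into one kernel-verified Lean document; each statement's English description precedes it below -/
import Mathlib

section
/- Let p ≥ 2 and let q_0,...,q_p be the Lagrange basis polynomials of degree p at the equally spaced nodes ξ_i = i/p in [0,1]. Fix 0 < α̂ < 1 and define ψ_0(x) = x for x ∈ [0, α̂) and ψ_0(x) = 0 for x ∈ [α̂, 1], and ψ_1(x) = 0 for x ∈ [0, α̂) and ψ_1(x) = x - 1 for x ∈ [α̂, 1]. Then for every bubble function q_i with 1 ≤ i ≤ p-1, there exist real coefficients s_{l,0}, s_{l,1} (0 ≤ l ≤ p) such that q_i(x) = Σ_{l=0}^{p} s_{l,0} ψ_0(x) q_l(x) + Σ_{l=0}^{p} s_{l,1} ψ_1(x) q_l(x) for all x ∈ [0,1]. -/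
/-- The Lagrange basis polynomial of degree `p` at the equally spaced nodes
`ξ i = i / p` in `[0,1]`, as a function `ℝ → ℝ`. -/
noncomputable def lagrangeBasis (p : ℕ) (i : Fin (p+1)) : ℝ → ℝ :=
  fun x => ∏ j ∈ Finset.univ.erase i, (x - (j : ℕ)/(p : ℝ)) / ((i : ℕ)/(p : ℝ) - (j : ℕ)/(p : ℝ))

/-- One-sided enrichment function `ψ₀` on `[0,1]` (slope 1): `x` on `[0, α̂)`, `0` on `[α̂, 1]`. -/
noncomputable def psi0 (αhat : ℝ) : ℝ → ℝ := fun x => if x < αhat then x else 0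

/-- One-sided enrichment function `ψ₁` on `[0,1]` (slope 1): `0` on `[0, α̂)`, `x - 1` on `[α̂, 1]`. -/
noncomputable def psi1 (αhat : ℝ) : ℝ → ℝ := fun x => if x < αhat then 0 else x - 1

/-!
A bubble function `q_i` vanishes at the nodes `0` and `1`, so it factors as `x * r(x)` and as
`(x - 1) * t(x)` with `r`, `t` of degree `< p + 1`; interpolating `r` and `t` at the nodes writes
them in the basis `q_l`. On `[0, α̂)` use the first factorisation (`ψ₀ = x`, `ψ₁ = 0`), on
`[α̂, 1]` the second (`ψ₀ = 0`, `ψ₁ = x - 1`).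
-/

open Polynomial Finset

namespace Lagrange

variable {F ι : Type*} [Field F] [DecidableEq ι] {s : Finset ι} {v : ι → F} {i j : ι}

theorem degree_basis_lt (hvs : Set.InjOn v s) (hi : i ∈ s) :
    (Lagrange.basis s v i).degree < #s := by
  rw [degree_basis hvs hi, Nat.cast_withBot]
  exact WithBot.coe_lt_coe.mpr (Nat.sub_lt (card_pos.mpr ⟨i, hi⟩) one_pos)

theorem exists_basis_eq_X_sub_C_mul_sum (hvs : Set.InjOn v s) (hi : i ∈ s) (hj : j ∈ s)
    (hij : i ≠ j) :
    ∃ c : ι → F,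
      Lagrange.basis s v i = (X - C (v j)) * ∑ k ∈ s, C (c k) * Lagrange.basis s v k := by
  set q := Lagrange.basis s v i /ₘ (X - C (v j))
  have hq : q.degree < #s := (degree_divByMonic_le _ _).trans_lt (degree_basis_lt hvs hi)
  refine ⟨fun k => q.eval (v k), ?_⟩
  rw [← interpolate_apply, ← eq_interpolate hvs hq]
  exact (mul_divByMonic_eq_iff_isRoot.mpr (eval_basis_of_ne hij hj)).symm

end Lagrange

noncomputable def equispacedNode (p : ℕ) (j : Fin (p+1)) : ℝ := (j : ℕ) / p

theorem equispacedNode_injective (p : ℕ) : Function.Injective (equispacedNode p) := by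
  rcases p.eq_zero_or_pos with rfl | hp
  · exact fun a b _ => Fin.ext (by omega)
  intro a b hab
  rw [equispacedNode, equispacedNode, div_left_inj' (by positivity)] at hab
  exact Fin.ext (mod_cast hab)

theorem lagrangeBasis_eq_eval (p : ℕ) (l : Fin (p+1)) (x : ℝ) :
    lagrangeBasis p l x = (Lagrange.basis univ (equispacedNode p) l).eval x := by
  simp only [lagrangeBasis, Lagrange.basis, eval_prod, Lagrange.basisDivisor, eval_mul, eval_C,
    eval_sub, eval_X, equispacedNode]
  exact prod_congr rfl fun _ _ => div_eq_inv_mul _ _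

theorem exists_lagrangeBasis_eq_mul_sum (p : ℕ) {i j : Fin (p+1)} (hij : i ≠ j) :
    ∃ c : Fin (p+1) → ℝ, ∀ x,
      lagrangeBasis p i x = (x - equispacedNode p j) * ∑ l, c l * lagrangeBasis p l x := by
  obtain ⟨c, hc⟩ := Lagrange.exists_basis_eq_X_sub_C_mul_sum
    (equispacedNode_injective p).injOn (mem_univ i) (mem_univ j) hij
  refine ⟨c, fun x => ?_⟩
  simp only [lagrangeBasis_eq_eval, hc, eval_mul, eval_sub, eval_X, eval_C, eval_finsetSum]

theorem stmt_6_general (p : ℕ) (αhat : ℝ)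
    (i : Fin (p+1)) (hi1 : 1 ≤ (i : ℕ)) (hi2 : (i : ℕ) ≤ p - 1) :
    ∃ s : Fin (p+1) → Fin 2 → ℝ, ∀ x ∈ Set.Icc (0:ℝ) 1,
      lagrangeBasis p i x =
        (∑ l : Fin (p+1), s l 0 * psi0 αhat x * lagrangeBasis p l x) +
        (∑ l : Fin (p+1), s l 1 * psi1 αhat x * lagrangeBasis p l x) := by
  have hi0 : i ≠ 0 := fun h => by simp [h] at hi1
  have hilast : i ≠ Fin.last p := fun h => by simp [h] at hi2; omega
  have hnode0 : equispacedNode p 0 = 0 := by simp [equispacedNode]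
  have hp : p ≠ 0 := by omega
  have hnode1 : equispacedNode p (Fin.last p) = 1 := by simp [equispacedNode, hp]
  obtain ⟨c₀, hc₀⟩ := exists_lagrangeBasis_eq_mul_sum p hi0
  obtain ⟨c₁, hc₁⟩ := exists_lagrangeBasis_eq_mul_sum p hilast
  refine ⟨fun l => ![c₀ l, c₁ l], fun x _ => ?_⟩
  by_cases hx : x < αhat
  · simp [psi0, psi1, hx, hc₀ x, hnode0, mul_sum, mul_assoc, mul_left_comm]
  · simp [psi0, psi1, hx, hc₁ x, hnode1, mul_sum, mul_assoc, mul_left_comm]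

theorem stmt_6 (p : ℕ) (hp : 2 ≤ p) (αhat : ℝ) (hα : 0 < αhat) (hα1 : αhat < 1)
    (i : Fin (p+1)) (hi1 : 1 ≤ (i : ℕ)) (hi2 : (i : ℕ) ≤ p - 1) :
    ∃ s : Fin (p+1) → Fin 2 → ℝ, ∀ x ∈ Set.Icc (0:ℝ) 1,
      lagrangeBasis p i x =
        (∑ l : Fin (p+1), s l 0 * psi0 αhat x * lagrangeBasis p l x) +
        (∑ l : Fin (p+1), s l 1 * psi1 αhat x * lagrangeBasis p l x) :=
  stmt_6_general p αhat i hi1 hi2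
end

section
/- Consider the Hilbert space H = {v ∈ L^2(a,b) : v restricted to (a,α) is in H^1(a,α), v restricted to (α,b) is in H^1(α,b), v(a) = v(b) = 0}, where a < α < b, equipped with the broken H^1 norm. Let β be measurable with 0 < β_* ≤ β(x) ≤ β* on (a,b), let w ∈ L^∞(a,b) with w ≥ 0, and let λ > 0. Define a(u,v) = ∫_a^b β u' v' dx + ∫_a^b w u v dx + [u]_α [v]_α / λ, where [v]_α = v(α+) - v(α-) denotes the jump of the one-sided traces at α. Then a is a bounded, coercive bilinear form on H, and hence for every f ∈ L^2(a,b) there exists a unique u ∈ H with a(u,v) = ∫_a^b f v dx for all v ∈ H. -/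
open Set MeasureTheory intervalIntegral

/-- Membership in the broken Sobolev space
`H = {v ∈ L² : v ∈ H¹(a,α) ∩ H¹(α,b), v(a) = v(b) = 0}`, encoded by a weak
derivative `v'` that is square-integrable on each piece together with the
fundamental theorem of calculus representations (which build in the boundary
conditions `v(a) = v(b) = 0`). -/
def MemBrokenH10 (a α b : ℝ) (v v' : ℝ → ℝ) : Prop :=
  IntervalIntegrable v' MeasureTheory.volume a α ∧
  IntervalIntegrable v' MeasureTheory.volume α b ∧
  IntervalIntegrable (fun x => (v' x)^2) MeasureTheory.volume a α ∧
  IntervalIntegrable (fun x => (v' x)^2) MeasureTheory.volume α b ∧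
  (∀ x ∈ Ico a α, v x = ∫ t in a..x, v' t) ∧
  (∀ x ∈ Ioc α b, v x = -∫ t in x..b, v' t)

/-- The jump `[v]_α = v(α⁺) - v(α⁻)` of a broken `H¹` function, expressed via its
weak derivative. -/
noncomputable def brokenJump (a α b : ℝ) (v' : ℝ → ℝ) : ℝ :=
  (-∫ t in α..b, v' t) - ∫ t in a..α, v' t

/-- The bilinear form `a(u,v) = ∫ β u'v' + ∫ w u v + [u]_α [v]_α / λ`. -/
noncomputable def brokenForm (a α b lam : ℝ) (β w : ℝ → ℝ)
    (u u' v v' : ℝ → ℝ) : ℝ :=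
  (∫ x in a..b, β x * u' x * v' x) + (∫ x in a..b, w x * u x * v x) +
    brokenJump a α b u' * brokenJump a α b v' / lam

/-- The squared broken `H¹` norm `‖v‖² = ‖v‖²_{L²} + ‖v'‖²_{L²(a,α)} + ‖v'‖²_{L²(α,b)}`. -/
noncomputable def brokenNormSq (a α b : ℝ) (v v' : ℝ → ℝ) : ℝ :=
  (∫ x in a..b, (v x)^2) + (∫ x in a..α, (v' x)^2) + ∫ x in α..b, (v' x)^2

/-!
The map `v ↦ v'` identifies `H` with `L²(a, b)`: on each side of `α` the boundary condition and
the fundamental theorem of calculus recover `v` from `v'` (`brokenPrimitive`), and every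
`g ∈ L²(a, b)` is the derivative of such a `v`, whose jump `[v]_α = -∫_a^b g` is unconstrained.
Transported to `L²(a, b)`, the form is symmetric with
`β_* ‖v'‖² ≤ a(v, v) ≤ (β^* + C_w (b - a)² + (b - a) / λ) ‖v'‖²`; the upper bound uses the broken
Poincaré inequality `∫ v² ≤ (b - a)² ∫ v'²`, which follows from `|v(x)| ≤ ∫ |v'|`, and
`[v]_α² ≤ (b - a) ∫ v'²`. Cauchy–Schwarz for positive symmetric forms extends the upper bound off
the diagonal, and Lax–Milgram in `L²(a, b)` gives a unique derivative, hence a solution that is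
unique off `α`. Poincaré again compares `‖v'‖` with the broken `H¹` norm.
-/

lemma MeasureTheory.MemLp.sq_integral_mul_le {X : Type*} [MeasurableSpace X] {ν : Measure X}
    {f g : X → ℝ} (hf : MemLp f 2 ν) (hg : MemLp g 2 ν) :
    (∫ t, f t * g t ∂ν) ^ 2 ≤ (∫ t, f t ^ 2 ∂ν) * ∫ t, g t ^ 2 ∂ν := by
  have inner_toLp : ∀ {f g : X → ℝ} (hf : MemLp f 2 ν) (hg : MemLp g 2 ν),
      inner ℝ (hf.toLp f) (hg.toLp g) = ∫ t, f t * g t ∂ν := by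
    intro f g hf hg
    rw [L2.inner_def]
    refine integral_congr_ae ?_
    filter_upwards [hf.coeFn_toLp, hg.coeFn_toLp] with t hft hgt
    simp [hft, hgt, mul_comm]
  have := real_inner_mul_inner_self_le (hf.toLp f) (hg.toLp g)
  simpa only [inner_toLp, ← sq] using this

lemma sq_intervalIntegral_mul_le {c d : ℝ} (hcd : c ≤ d) {f g : ℝ → ℝ}
    (hf : MemLp f 2 (volume.restrict (Ioc c d))) (hg : MemLp g 2 (volume.restrict (Ioc c d))) :
    (∫ t in c..d, f t * g t) ^ 2 ≤ (∫ t in c..d, f t ^ 2) * ∫ t in c..d, g t ^ 2 := by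
  simpa only [integral_of_le hcd] using hf.sq_integral_mul_le hg

lemma sq_intervalIntegral_le {c d : ℝ} (hcd : c ≤ d) {f : ℝ → ℝ}
    (hf : MemLp f 2 (volume.restrict (Ioc c d))) :
    (∫ t in c..d, f t) ^ 2 ≤ (d - c) * ∫ t in c..d, f t ^ 2 := by
  simpa [mul_comm, hcd] using sq_intervalIntegral_mul_le hcd hf (memLp_const 1)

lemma memLp_two_restrict_Ioc_iff {c d : ℝ} (hcd : c ≤ d) {g : ℝ → ℝ} :
    MemLp g 2 (volume.restrict (Ioc c d)) ↔
      IntervalIntegrable g volume c d ∧ IntervalIntegrable (fun x => g x ^ 2) volume c d := by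
  simp only [intervalIntegrable_iff_integrableOn_Ioc_of_le hcd]
  exact ⟨fun hg => ⟨hg.integrable one_le_two, hg.integrable_sq⟩,
    fun ⟨hg, hsq⟩ => (memLp_two_iff_integrable_sq hg.aestronglyMeasurable).2 hsq⟩

lemma intervalIntegral_congr_ae_restrict {a b c d : ℝ} {f g : ℝ → ℝ} (hcd : c ≤ d)
    (hsub : Ioc c d ⊆ Ioc a b) (h : f =ᵐ[volume.restrict (Ioc a b)] g) :
    ∫ t in c..d, f t = ∫ t in c..d, g t := by
  simpa only [integral_of_le hcd] using
    integral_congr_ae (ae_restrict_of_ae_restrict_of_subset hsub h)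

lemma MeasureTheory.Lp.norm_sq_eq_intervalIntegral_sq {a b : ℝ} (hab : a ≤ b)
    (x : Lp ℝ 2 (volume.restrict (Ioc a b))) : ‖x‖ ^ 2 = ∫ t in a..b, x t ^ 2 := by
  rw [← real_inner_self_eq_norm_sq, L2.inner_def, integral_of_le hab]
  simp [sq]

lemma intervalIntegrable_mul_mul_of_memLp {a b C : ℝ} {φ f g : ℝ → ℝ} (hab : a ≤ b)
    (hφ : Measurable φ) (hφb : ∀ x, |φ x| ≤ C) (hf : MemLp f 2 (volume.restrict (Ioc a b)))
    (hg : MemLp g 2 (volume.restrict (Ioc a b))) :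
    IntervalIntegrable (fun x => φ x * f x * g x) volume a b := by
  simp only [intervalIntegrable_iff_integrableOn_Ioc_of_le hab, mul_assoc]
  exact (hf.integrable_mul hg).bdd_mul hφ.aestronglyMeasurable (ae_of_all _ hφb)

namespace LinearMap.BilinForm

lemma abs_apply_le_of_isSymm {E : Type*} [SeminormedAddCommGroup E] [Module ℝ E]
    (B : LinearMap.BilinForm ℝ E) (hB : B.IsSymm) (hpos : ∀ x, 0 ≤ B x x) {C : ℝ}
    (hC : ∀ x, B x x ≤ C * ‖x‖ ^ 2) (x y : E) : |B x y| ≤ C * ‖x‖ * ‖y‖ := by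
  have hCxy : 0 ≤ C * ‖x‖ * ‖y‖ := by
    rcases (norm_nonneg x).eq_or_lt with hx | hx
    · simp [← hx]
    · have : 0 ≤ C := nonneg_of_mul_nonneg_left ((hpos x).trans (hC x)) (by positivity)
      positivity
  refine abs_le_of_sq_le_sq ?_ hCxy
  calc B x y ^ 2 ≤ B x x * B y y := B.apply_sq_le_of_symm hpos (isSymm_iff.1 hB) x y
    _ ≤ (C * ‖x‖ ^ 2) * (C * ‖y‖ ^ 2) :=
      mul_le_mul (hC x) (hC y) (hpos y) ((hpos x).trans (hC x))
    _ = (C * ‖x‖ * ‖y‖) ^ 2 := by ring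

theorem existsUnique_apply_eq_of_coercive {E : Type*} [NormedAddCommGroup E]
    [InnerProductSpace ℝ E] [CompleteSpace E] (B : LinearMap.BilinForm ℝ E) {c C : ℝ} (hc : 0 < c)
    (hcoer : ∀ x, c * ‖x‖ ^ 2 ≤ B x x) (hbdd : ∀ x y, |B x y| ≤ C * ‖x‖ * ‖y‖)
    (ℓ : E →L[ℝ] ℝ) : ∃! x, ∀ y, B x y = ℓ y := by
  set B' : E →L[ℝ] E →L[ℝ] ℝ := B.mkContinuous₂ C hbdd
  have hB' : IsCoercive B' := ⟨c, hc, fun x => by simpa [B', sq, mul_assoc] using hcoer x⟩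
  have hℓ : ∀ y, inner ℝ ((InnerProductSpace.toDual ℝ E).symm ℓ) y = ℓ y :=
    fun y => InnerProductSpace.toDual_symm_apply
  refine ⟨hB'.continuousLinearEquivOfBilin.symm ((InnerProductSpace.toDual ℝ E).symm ℓ),
    fun y => ?_, fun x hx => ?_⟩
  · have := hB'.continuousLinearEquivOfBilin_apply
      (hB'.continuousLinearEquivOfBilin.symm ((InnerProductSpace.toDual ℝ E).symm ℓ)) y
    rw [ContinuousLinearEquiv.apply_symm_apply, hℓ] at this
    exact this.symm
  · rw [ContinuousLinearEquiv.eq_symm_apply]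
    exact (hB'.unique_continuousLinearEquivOfBilin fun y => (hℓ y).trans (hx y).symm).symm

end LinearMap.BilinForm

noncomputable def brokenPrimitive (a α b : ℝ) (g : ℝ → ℝ) (x : ℝ) : ℝ :=
  if x < α then ∫ t in a..x, g t else -∫ t in x..b, g t

namespace MemBrokenH10

variable {a α b : ℝ} {u u' v v' g : ℝ → ℝ}

lemma of_memLp (haα : a ≤ α) (hαb : α ≤ b)
    (hg : MemLp g 2 (volume.restrict (Ioc a b)))
    (hl : ∀ x ∈ Ico a α, v x = ∫ t in a..x, g t) (hr : ∀ x ∈ Ioc α b, v x = -∫ t in x..b, g t) :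
    MemBrokenH10 a α b v g := by
  obtain ⟨hi, hsq⟩ := (memLp_two_restrict_Ioc_iff (haα.trans hαb)).1 hg
  have hα : α ∈ uIcc a b := by rw [uIcc_of_le (haα.trans hαb)]; exact ⟨haα, hαb⟩
  exact ⟨hi.mono_set (uIcc_subset_uIcc_left hα), hi.mono_set (uIcc_subset_uIcc_right hα),
    hsq.mono_set (uIcc_subset_uIcc_left hα), hsq.mono_set (uIcc_subset_uIcc_right hα), hl, hr⟩

lemma _root_.memBrokenH10_brokenPrimitive (haα : a ≤ α) (hαb : α ≤ b)
    (hg : MemLp g 2 (volume.restrict (Ioc a b))) :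
    MemBrokenH10 a α b (brokenPrimitive a α b g) g :=
  .of_memLp haα hαb hg (fun _ hx => if_pos hx.2) (fun _ hx => if_neg (not_lt.2 hx.1.le))

lemma intervalIntegrable_deriv (hv : MemBrokenH10 a α b v v') :
    IntervalIntegrable v' volume a b :=
  hv.1.trans hv.2.1

lemma memLp_deriv (haα : a ≤ α) (hαb : α ≤ b) (hv : MemBrokenH10 a α b v v') :
    MemLp v' 2 (volume.restrict (Ioc a b)) :=
  (memLp_two_restrict_Ioc_iff (haα.trans hαb)).2
    ⟨hv.intervalIntegrable_deriv, hv.2.2.1.trans hv.2.2.2.1⟩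

lemma add (haα : a ≤ α) (hαb : α ≤ b) (hu : MemBrokenH10 a α b u u')
    (hv : MemBrokenH10 a α b v v') : MemBrokenH10 a α b (u + v) (u' + v') := by
  refine .of_memLp haα hαb ((hu.memLp_deriv haα hαb).add (hv.memLp_deriv haα hαb))
    (fun x hx => ?_) (fun x hx => ?_)
  · have hsub : uIcc a x ⊆ uIcc a α := uIcc_subset_uIcc_left (by
      rw [uIcc_of_le haα]; exact ⟨hx.1, hx.2.le⟩)
    rw [Pi.add_apply, hu.2.2.2.2.1 x hx, hv.2.2.2.2.1 x hx,
      ← integral_add (hu.1.mono_set hsub) (hv.1.mono_set hsub)]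
    rfl
  · have hsub : uIcc x b ⊆ uIcc α b := uIcc_subset_uIcc_right (by
      rw [uIcc_of_le hαb]; exact ⟨hx.1.le, hx.2⟩)
    rw [Pi.add_apply, hu.2.2.2.2.2 x hx, hv.2.2.2.2.2 x hx, ← neg_add,
      ← integral_add (hu.2.1.mono_set hsub) (hv.2.1.mono_set hsub)]
    rfl

lemma const_smul (haα : a ≤ α) (hαb : α ≤ b) (c : ℝ) (hv : MemBrokenH10 a α b v v') :
    MemBrokenH10 a α b (c • v) (c • v') := by
  refine .of_memLp haα hαb ((hv.memLp_deriv haα hαb).const_smul c)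
    (fun x hx => ?_) (fun x hx => ?_)
  · simp only [Pi.smul_apply, smul_eq_mul, hv.2.2.2.2.1 x hx, intervalIntegral.integral_const_mul]
  · simp only [Pi.smul_apply, smul_eq_mul, hv.2.2.2.2.2 x hx, intervalIntegral.integral_const_mul,
      mul_neg]

lemma eq_of_ae_eq_deriv (hu : MemBrokenH10 a α b u u') (hv : MemBrokenH10 a α b v v')
    (h : u' =ᵐ[volume.restrict (Ioc a b)] v') {x : ℝ} (hx : x ∈ Icc a b) (hxα : x ≠ α) :
    u x = v x := by
  rcases lt_or_gt_of_ne hxα with hlt | hgt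
  · rw [hu.2.2.2.2.1 x ⟨hx.1, hlt⟩, hv.2.2.2.2.1 x ⟨hx.1, hlt⟩]
    exact intervalIntegral_congr_ae_restrict hx.1 (Ioc_subset_Ioc_right hx.2) h
  · rw [hu.2.2.2.2.2 x ⟨hgt, hx.2⟩, hv.2.2.2.2.2 x ⟨hgt, hx.2⟩]
    exact congrArg _ (intervalIntegral_congr_ae_restrict hx.2 (Ioc_subset_Ioc_left hx.1) h)

lemma ae_eq_of_ae_eq_deriv (hu : MemBrokenH10 a α b u u') (hv : MemBrokenH10 a α b v v')
    (h : u' =ᵐ[volume.restrict (Ioc a b)] v') : u =ᵐ[volume.restrict (Ioc a b)] v := by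
  filter_upwards [ae_restrict_mem measurableSet_Ioc, ae_restrict_of_ae (Measure.ae_ne volume α)]
    with x hx hxα
  exact hu.eq_of_ae_eq_deriv hv h (Ioc_subset_Icc_self hx) hxα

lemma abs_le (hv : MemBrokenH10 a α b v v') {x : ℝ} (hx : x ∈ Icc a b) (hxα : x ≠ α) :
    |v x| ≤ ∫ t in a..b, |v' t| := by
  have hmono : ∀ {c d}, a ≤ c → c ≤ d → d ≤ b → ∫ t in c..d, |v' t| ≤ ∫ t in a..b, |v' t| :=
    fun hac hcd hdb => integral_mono_interval hac hcd hdb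
      (Filter.Eventually.of_forall fun t => abs_nonneg (v' t)) hv.intervalIntegrable_deriv.abs
  rcases lt_or_gt_of_ne hxα with hlt | hgt
  · rw [hv.2.2.2.2.1 x ⟨hx.1, hlt⟩]
    exact (abs_integral_le_integral_abs hx.1).trans (hmono le_rfl hx.1 hx.2)
  · rw [hv.2.2.2.2.2 x ⟨hgt, hx.2⟩, abs_neg]
    exact (abs_integral_le_integral_abs hx.2).trans (hmono hx.1 hx.2 le_rfl)

lemma aestronglyMeasurable (haα : a ≤ α) (hαb : α ≤ b) (hv : MemBrokenH10 a α b v v') :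
    AEStronglyMeasurable v (volume.restrict (Ioc a b)) := by
  rw [← Ioc_union_Ioc_eq_Ioc haα hαb, aestronglyMeasurable_union_iff]
  constructor
  · refine (((continuousOn_primitive_interval' hv.1 left_mem_uIcc).mono ?_).aestronglyMeasurable
      measurableSet_Ioc).congr ?_
    · rw [uIcc_of_le haα]; exact Ioc_subset_Icc_self
    · filter_upwards [ae_restrict_mem measurableSet_Ioc,
        ae_restrict_of_ae (Measure.ae_ne volume α)] with x hx hxα
      exact (hv.2.2.2.2.1 x ⟨hx.1.le, lt_of_le_of_ne hx.2 hxα⟩).symm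
  · refine ((((continuousOn_primitive_interval_left
      ((intervalIntegrable_iff' (μ := volume)).1 hv.2.1)).neg).mono ?_).aestronglyMeasurable
      measurableSet_Ioc).congr ?_
    · rw [uIcc_of_le hαb]; exact Ioc_subset_Icc_self
    · filter_upwards [ae_restrict_mem measurableSet_Ioc] with x hx
      exact (hv.2.2.2.2.2 x hx).symm

lemma memLp (haα : a ≤ α) (hαb : α ≤ b) (hv : MemBrokenH10 a α b v v') :
    MemLp v 2 (volume.restrict (Ioc a b)) := by
  refine .of_bound (hv.aestronglyMeasurable haα hαb) (∫ t in a..b, |v' t|) ?_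
  filter_upwards [ae_restrict_mem measurableSet_Ioc, ae_restrict_of_ae (Measure.ae_ne volume α)]
    with x hx hxα
  exact hv.abs_le (Ioc_subset_Icc_self hx) hxα

lemma integral_sq_le (haα : a ≤ α) (hαb : α ≤ b) (hv : MemBrokenH10 a α b v v') :
    ∫ x in a..b, v x ^ 2 ≤ (b - a) ^ 2 * ∫ x in a..b, v' x ^ 2 := by
  have hab := haα.trans hαb
  set K := ∫ t in a..b, |v' t|
  have hK : K ^ 2 ≤ (b - a) * ∫ x in a..b, v' x ^ 2 := by
    simpa only [Pi.abs_apply, sq_abs] using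
      sq_intervalIntegral_le hab (hv.memLp_deriv haα hαb).abs
  have hvK : ∫ x in a..b, v x ^ 2 ≤ ∫ _ in a..b, K ^ 2 := by
    refine integral_mono_ae_restrict hab
      ((intervalIntegrable_iff_integrableOn_Ioc_of_le hab).2 (hv.memLp haα hαb).integrable_sq)
      intervalIntegrable_const ?_
    filter_upwards [ae_restrict_mem measurableSet_Icc, ae_restrict_of_ae (Measure.ae_ne volume α)]
      with x hx hxα
    simpa only [sq_abs] using pow_le_pow_left₀ (abs_nonneg _) (hv.abs_le hx hxα) 2
  calc ∫ x in a..b, v x ^ 2 ≤ (b - a) * K ^ 2 := by simpa [hab] using hvK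
    _ ≤ (b - a) * ((b - a) * ∫ x in a..b, v' x ^ 2) := by gcongr
    _ = (b - a) ^ 2 * ∫ x in a..b, v' x ^ 2 := by ring

lemma brokenJump_eq (hv : MemBrokenH10 a α b v v') :
    brokenJump a α b v' = -∫ x in a..b, v' x := by
  rw [brokenJump, ← integral_add_adjacent_intervals hv.1 hv.2.1]
  ring

lemma sq_brokenJump_le (haα : a ≤ α) (hαb : α ≤ b) (hv : MemBrokenH10 a α b v v') :
    brokenJump a α b v' ^ 2 ≤ (b - a) * ∫ x in a..b, v' x ^ 2 := by
  rw [hv.brokenJump_eq, neg_sq]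
  exact sq_intervalIntegral_le (haα.trans hαb) (hv.memLp_deriv haα hαb)

lemma brokenNormSq_eq (hv : MemBrokenH10 a α b v v') :
    brokenNormSq a α b v v' = (∫ x in a..b, v x ^ 2) + ∫ x in a..b, v' x ^ 2 := by
  rw [brokenNormSq, add_assoc, integral_add_adjacent_intervals hv.2.2.1 hv.2.2.2.1]

lemma integral_deriv_sq_le_brokenNormSq (haα : a ≤ α) (hαb : α ≤ b)
    (hv : MemBrokenH10 a α b v v') :
    ∫ x in a..b, v' x ^ 2 ≤ brokenNormSq a α b v v' := by
  have hv2 : 0 ≤ ∫ x in a..b, v x ^ 2 := integral_nonneg (haα.trans hαb) fun x _ => sq_nonneg _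
  rw [hv.brokenNormSq_eq]
  linarith

lemma brokenNormSq_le (haα : a ≤ α) (hαb : α ≤ b) (hv : MemBrokenH10 a α b v v') :
    brokenNormSq a α b v v' ≤ (1 + (b - a) ^ 2) * ∫ x in a..b, v' x ^ 2 := by
  rw [hv.brokenNormSq_eq]
  linarith [hv.integral_sq_le haα hαb]

lemma norm_toLp_deriv_le (haα : a ≤ α) (hαb : α ≤ b) (hv : MemBrokenH10 a α b v v') :
    ‖(hv.memLp_deriv haα hαb).toLp v'‖ ≤ √(brokenNormSq a α b v v') := by
  have hab := haα.trans hαb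
  refine Real.le_sqrt_of_sq_le ?_
  rw [Lp.norm_sq_eq_intervalIntegral_sq hab, intervalIntegral_congr_ae_restrict hab subset_rfl
    (by filter_upwards [(hv.memLp_deriv haα hαb).coeFn_toLp] with t ht; rw [ht])]
  exact hv.integral_deriv_sq_le_brokenNormSq haα hαb

end MemBrokenH10

section BrokenForm

variable {a α b lam Cβ Cw : ℝ} {β w u u' u₁ u₁' u₂ u₂' v v' v₂ v₂' : ℝ → ℝ}

lemma brokenForm_comm :
    brokenForm a α b lam β w u u' v v' = brokenForm a α b lam β w v v' u u' := by
  simp only [brokenForm, mul_right_comm (β _) (u' _), mul_right_comm (w _) (u _),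
    mul_comm (brokenJump a α b u')]

lemma brokenForm_smul_left (c : ℝ) :
    brokenForm a α b lam β w (c • u) (c • u') v v' = c * brokenForm a α b lam β w u u' v v' := by
  have hc : ∀ {c' d : ℝ} (φ f g : ℝ → ℝ),
      ∫ x in c'..d, φ x * (c * f x) * g x = c * ∫ x in c'..d, φ x * f x * g x := fun φ f g => by
    rw [← intervalIntegral.integral_const_mul]
    exact integral_congr fun x _ => by ring
  simp only [brokenForm, brokenJump, Pi.smul_apply, smul_eq_mul, hc,
    intervalIntegral.integral_const_mul]
  ring

lemma brokenForm_add_left (haα : a ≤ α) (hαb : α ≤ b) (hβ : Measurable β)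
    (hβb : ∀ x, |β x| ≤ Cβ) (hw : Measurable w) (hwb : ∀ x, |w x| ≤ Cw)
    (hu₁ : MemBrokenH10 a α b u₁ u₁') (hu₂ : MemBrokenH10 a α b u₂ u₂')
    (hv : MemBrokenH10 a α b v v') :
    brokenForm a α b lam β w (u₁ + u₂) (u₁' + u₂') v v' =
      brokenForm a α b lam β w u₁ u₁' v v' + brokenForm a α b lam β w u₂ u₂' v v' := by
  have hab := haα.trans hαb
  have hβ' : ∀ {f : ℝ → ℝ}, MemLp f 2 (volume.restrict (Ioc a b)) →
      IntervalIntegrable (fun x => β x * f x * v' x) volume a b :=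
    fun hf => intervalIntegrable_mul_mul_of_memLp hab hβ hβb hf (hv.memLp_deriv haα hαb)
  have hw' : ∀ {f : ℝ → ℝ}, MemLp f 2 (volume.restrict (Ioc a b)) →
      IntervalIntegrable (fun x => w x * f x * v x) volume a b :=
    fun hf => intervalIntegrable_mul_mul_of_memLp hab hw hwb hf (hv.memLp haα hαb)
  simp only [brokenForm, brokenJump, Pi.add_apply, mul_add, add_mul,
    integral_add (hβ' (hu₁.memLp_deriv haα hαb)) (hβ' (hu₂.memLp_deriv haα hαb)),
    integral_add (hw' (hu₁.memLp haα hαb)) (hw' (hu₂.memLp haα hαb)),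
    integral_add hu₁.1 hu₂.1, integral_add hu₁.2.1 hu₂.2.1]
  ring

lemma brokenForm_congr_ae (haα : a ≤ α) (hαb : α ≤ b)
    (hu : u =ᵐ[volume.restrict (Ioc a b)] u₂) (hu' : u' =ᵐ[volume.restrict (Ioc a b)] u₂')
    (hv : v =ᵐ[volume.restrict (Ioc a b)] v₂) (hv' : v' =ᵐ[volume.restrict (Ioc a b)] v₂') :
    brokenForm a α b lam β w u u' v v' = brokenForm a α b lam β w u₂ u₂' v₂ v₂' := by
  have hab := haα.trans hαb
  have hl : Ioc a α ⊆ Ioc a b := Ioc_subset_Ioc_right hαb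
  have hr : Ioc α b ⊆ Ioc a b := Ioc_subset_Ioc_left haα
  simp only [brokenForm, brokenJump, intervalIntegral_congr_ae_restrict haα hl hu',
    intervalIntegral_congr_ae_restrict haα hl hv', intervalIntegral_congr_ae_restrict hαb hr hu',
    intervalIntegral_congr_ae_restrict hαb hr hv']
  congr 2
  · refine intervalIntegral_congr_ae_restrict hab subset_rfl ?_
    filter_upwards [hu', hv'] with x hux hvx
    rw [hux, hvx]
  · refine intervalIntegral_congr_ae_restrict hab subset_rfl ?_
    filter_upwards [hu, hv] with x hux hvx
    rw [hux, hvx]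

lemma brokenForm_self_le (haα : a ≤ α) (hαb : α ≤ b) (hβ : Measurable β)
    (hβb : ∀ x, |β x| ≤ Cβ) (hw : Measurable w) (hwb : ∀ x, |w x| ≤ Cw) (hlam : 0 ≤ lam)
    (hv : MemBrokenH10 a α b v v') :
    brokenForm a α b lam β w v v' v v' ≤
      (Cβ + Cw * (b - a) ^ 2 + (b - a) / lam) * ∫ x in a..b, v' x ^ 2 := by
  have hab := haα.trans hαb
  have hv'2 := hv.memLp_deriv haα hαb
  have hv2 := hv.memLp haα hαb
  have hsq : ∀ {f : ℝ → ℝ}, MemLp f 2 (volume.restrict (Ioc a b)) →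
      IntervalIntegrable (fun x => f x ^ 2) volume a b :=
    fun hf => ((memLp_two_restrict_Ioc_iff hab).1 hf).2
  have hCw : 0 ≤ Cw := (abs_nonneg _).trans (hwb 0)
  have hβterm : ∫ x in a..b, β x * v' x * v' x ≤ Cβ * ∫ x in a..b, v' x ^ 2 := by
    rw [← intervalIntegral.integral_const_mul]
    refine integral_mono_on hab (intervalIntegrable_mul_mul_of_memLp hab hβ hβb hv'2 hv'2)
      ((hsq hv'2).const_mul Cβ) fun x _ => ?_
    rw [mul_assoc, ← sq]
    exact mul_le_mul_of_nonneg_right ((le_abs_self _).trans (hβb x)) (sq_nonneg _)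
  have hwterm : ∫ x in a..b, w x * v x * v x ≤ Cw * ∫ x in a..b, v x ^ 2 := by
    rw [← intervalIntegral.integral_const_mul]
    refine integral_mono_on hab (intervalIntegrable_mul_mul_of_memLp hab hw hwb hv2 hv2)
      ((hsq hv2).const_mul Cw) fun x _ => ?_
    rw [mul_assoc, ← sq]
    exact mul_le_mul_of_nonneg_right ((le_abs_self _).trans (hwb x)) (sq_nonneg _)
  have hjump : brokenJump a α b v' * brokenJump a α b v' / lam ≤
      (b - a) / lam * ∫ x in a..b, v' x ^ 2 := by
    rw [← sq, div_mul_eq_mul_div]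
    exact div_le_div_of_nonneg_right (hv.sq_brokenJump_le haα hαb) hlam
  have hpoinc := mul_le_mul_of_nonneg_left (hv.integral_sq_le haα hαb) hCw
  rw [brokenForm]
  linarith

lemma le_brokenForm_self {βs : ℝ} (haα : a ≤ α) (hαb : α ≤ b) (hβ : Measurable β)
    (hβb : ∀ x, |β x| ≤ Cβ) (hβs : ∀ x, βs ≤ β x) (hw0 : ∀ x, 0 ≤ w x) (hlam : 0 ≤ lam)
    (hv : MemBrokenH10 a α b v v') :
    βs * ∫ x in a..b, v' x ^ 2 ≤ brokenForm a α b lam β w v v' v v' := by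
  have hab := haα.trans hαb
  have hv'2 := hv.memLp_deriv haα hαb
  have hβterm : βs * ∫ x in a..b, v' x ^ 2 ≤ ∫ x in a..b, β x * v' x * v' x := by
    rw [← intervalIntegral.integral_const_mul]
    refine integral_mono_on hab (((memLp_two_restrict_Ioc_iff hab).1 hv'2).2.const_mul βs)
      (intervalIntegrable_mul_mul_of_memLp hab hβ hβb hv'2 hv'2) fun x _ => ?_
    rw [mul_assoc, ← sq]
    exact mul_le_mul_of_nonneg_right (hβs x) (sq_nonneg _)
  have hwterm : 0 ≤ ∫ x in a..b, w x * v x * v x :=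
    integral_nonneg hab fun x _ => by rw [mul_assoc]; exact mul_nonneg (hw0 x) (mul_self_nonneg _)
  have hjump : 0 ≤ brokenJump a α b v' * brokenJump a α b v' / lam :=
    div_nonneg (mul_self_nonneg _) hlam
  rw [brokenForm]
  linarith

lemma MemBrokenH10.mul_brokenNormSq_le_brokenForm {βs : ℝ} (haα : a ≤ α) (hαb : α ≤ b)
    (hβ : Measurable β) (hβb : ∀ x, |β x| ≤ Cβ) (hβs0 : 0 ≤ βs) (hβs : ∀ x, βs ≤ β x)
    (hw0 : ∀ x, 0 ≤ w x) (hlam : 0 ≤ lam) (hv : MemBrokenH10 a α b v v') :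
    βs / (1 + (b - a) ^ 2) * brokenNormSq a α b v v' ≤ brokenForm a α b lam β w v v' v v' :=
  calc βs / (1 + (b - a) ^ 2) * brokenNormSq a α b v v'
      ≤ βs / (1 + (b - a) ^ 2) * ((1 + (b - a) ^ 2) * ∫ x in a..b, v' x ^ 2) := by
        gcongr; exact hv.brokenNormSq_le haα hαb
    _ = βs * ∫ x in a..b, v' x ^ 2 := by field_simp
    _ ≤ _ := le_brokenForm_self haα hαb hβ hβb hβs hw0 hlam hv

end BrokenForm

section Transport

variable {a α b lam Cβ Cw : ℝ} {β w : ℝ → ℝ}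

lemma brokenPrimitive_coeFn_add (haα : a ≤ α) (hαb : α ≤ b)
    (x y : Lp ℝ 2 (volume.restrict (Ioc a b))) :
    brokenPrimitive a α b ⇑(x + y) =ᵐ[volume.restrict (Ioc a b)]
      brokenPrimitive a α b x + brokenPrimitive a α b y :=
  (memBrokenH10_brokenPrimitive haα hαb (Lp.memLp _)).ae_eq_of_ae_eq_deriv
    ((memBrokenH10_brokenPrimitive haα hαb (Lp.memLp x)).add haα hαb
      (memBrokenH10_brokenPrimitive haα hαb (Lp.memLp y))) (Lp.coeFn_add x y)

lemma brokenPrimitive_coeFn_smul (haα : a ≤ α) (hαb : α ≤ b) (c : ℝ)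
    (x : Lp ℝ 2 (volume.restrict (Ioc a b))) :
    brokenPrimitive a α b ⇑(c • x) =ᵐ[volume.restrict (Ioc a b)] c • brokenPrimitive a α b x :=
  (memBrokenH10_brokenPrimitive haα hαb (Lp.memLp _)).ae_eq_of_ae_eq_deriv
    ((memBrokenH10_brokenPrimitive haα hαb (Lp.memLp x)).const_smul haα hαb c)
    (Lp.coeFn_smul c x)

lemma abs_integral_mul_brokenPrimitive_le {f : ℝ → ℝ} (haα : a ≤ α) (hαb : α ≤ b)
    (hf : MemLp f 2 (volume.restrict (Ioc a b)))
    (y : Lp ℝ 2 (volume.restrict (Ioc a b))) :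
    |∫ t in a..b, f t * brokenPrimitive a α b y t| ≤
      √(∫ t in a..b, f t ^ 2) * (b - a) * ‖y‖ := by
  have hab := haα.trans hαb
  have hy := memBrokenH10_brokenPrimitive haα hαb (Lp.memLp y)
  have hsq : (∫ t in a..b, f t * brokenPrimitive a α b y t) ^ 2 ≤
      (∫ t in a..b, f t ^ 2) * ((b - a) * ‖y‖) ^ 2 := by
    refine (sq_intervalIntegral_mul_le hab hf (hy.memLp haα hαb)).trans ?_
    rw [mul_pow, Lp.norm_sq_eq_intervalIntegral_sq hab]
    exact mul_le_mul_of_nonneg_left (hy.integral_sq_le haα hαb)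
      (integral_nonneg hab fun t _ => sq_nonneg (f t))
  calc _ ≤ √((∫ t in a..b, f t ^ 2) * ((b - a) * ‖y‖) ^ 2) := Real.abs_le_sqrt hsq
    _ = _ := by
      rw [Real.sqrt_mul (integral_nonneg hab fun t _ => sq_nonneg (f t)),
        Real.sqrt_sq (mul_nonneg (sub_nonneg.2 hab) (norm_nonneg y)), mul_assoc]

lemma brokenForm_brokenPrimitive_add_left (haα : a ≤ α) (hαb : α ≤ b) (lam : ℝ)
    (hβ : Measurable β) (hβb : ∀ x, |β x| ≤ Cβ) (hw : Measurable w) (hwb : ∀ x, |w x| ≤ Cw)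
    (x y z : Lp ℝ 2 (volume.restrict (Ioc a b))) :
    brokenForm a α b lam β w (brokenPrimitive a α b ⇑(x + y)) ⇑(x + y)
        (brokenPrimitive a α b z) z =
      brokenForm a α b lam β w (brokenPrimitive a α b x) x (brokenPrimitive a α b z) z +
        brokenForm a α b lam β w (brokenPrimitive a α b y) y (brokenPrimitive a α b z) z := by
  rw [brokenForm_congr_ae haα hαb (brokenPrimitive_coeFn_add haα hαb x y) (Lp.coeFn_add x y)
    .rfl .rfl]
  exact brokenForm_add_left haα hαb hβ hβb hw hwb
    (memBrokenH10_brokenPrimitive haα hαb (Lp.memLp x))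
    (memBrokenH10_brokenPrimitive haα hαb (Lp.memLp y))
    (memBrokenH10_brokenPrimitive haα hαb (Lp.memLp z))

lemma brokenForm_brokenPrimitive_smul_left (haα : a ≤ α) (hαb : α ≤ b) (lam c : ℝ)
    (x y : Lp ℝ 2 (volume.restrict (Ioc a b))) :
    brokenForm a α b lam β w (brokenPrimitive a α b ⇑(c • x)) ⇑(c • x)
        (brokenPrimitive a α b y) y =
      c * brokenForm a α b lam β w (brokenPrimitive a α b x) x (brokenPrimitive a α b y) y := by
  rw [brokenForm_congr_ae haα hαb (brokenPrimitive_coeFn_smul haα hαb c x) (Lp.coeFn_smul c x)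
    .rfl .rfl, brokenForm_smul_left]

/-- An element of `L²(a, b)` stands for the derivative `v'` of the function
`v = brokenPrimitive a α b v'` of `H`. -/
noncomputable def brokenBilinForm (haα : a ≤ α) (hαb : α ≤ b) (lam : ℝ) (hβ : Measurable β)
    (hβb : ∀ x, |β x| ≤ Cβ) (hw : Measurable w) (hwb : ∀ x, |w x| ≤ Cw) :
    LinearMap.BilinForm ℝ (Lp ℝ 2 (volume.restrict (Ioc a b))) :=
  LinearMap.mk₂ ℝ
    (fun x y => brokenForm a α b lam β w (brokenPrimitive a α b x) x (brokenPrimitive a α b y) y)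
    (brokenForm_brokenPrimitive_add_left haα hαb lam hβ hβb hw hwb)
    (brokenForm_brokenPrimitive_smul_left haα hαb lam)
    (fun x y z => by
      simp only [brokenForm_comm (u := brokenPrimitive a α b x)]
      exact brokenForm_brokenPrimitive_add_left haα hαb lam hβ hβb hw hwb y z x)
    (fun c x y => by
      simp only [brokenForm_comm (u := brokenPrimitive a α b x)]
      exact brokenForm_brokenPrimitive_smul_left haα hαb lam c y x)

end Transport

section BrokenBilinForm

variable {a α b lam Cβ Cw : ℝ} {β w u u' v v' f : ℝ → ℝ} (haα : a ≤ α) (hαb : α ≤ b)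
  (hβ : Measurable β) (hβb : ∀ x, |β x| ≤ Cβ) (hw : Measurable w) (hwb : ∀ x, |w x| ≤ Cw)

lemma brokenBilinForm_apply_self_le (hlam : 0 ≤ lam) (x : Lp ℝ 2 (volume.restrict (Ioc a b))) :
    brokenBilinForm haα hαb lam hβ hβb hw hwb x x ≤
      (Cβ + Cw * (b - a) ^ 2 + (b - a) / lam) * ‖x‖ ^ 2 := by
  rw [Lp.norm_sq_eq_intervalIntegral_sq (haα.trans hαb)]
  exact brokenForm_self_le haα hαb hβ hβb hw hwb hlam
    (memBrokenH10_brokenPrimitive haα hαb (Lp.memLp x))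

lemma le_brokenBilinForm_apply_self {βs : ℝ} (hβs : ∀ x, βs ≤ β x) (hw0 : ∀ x, 0 ≤ w x)
    (hlam : 0 ≤ lam) (x : Lp ℝ 2 (volume.restrict (Ioc a b))) :
    βs * ‖x‖ ^ 2 ≤ brokenBilinForm haα hαb lam hβ hβb hw hwb x x := by
  rw [Lp.norm_sq_eq_intervalIntegral_sq (haα.trans hαb)]
  exact le_brokenForm_self haα hαb hβ hβb hβs hw0 hlam
    (memBrokenH10_brokenPrimitive haα hαb (Lp.memLp x))

lemma abs_brokenBilinForm_le (hβ0 : ∀ x, 0 ≤ β x) (hw0 : ∀ x, 0 ≤ w x) (hlam : 0 ≤ lam)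
    (x y : Lp ℝ 2 (volume.restrict (Ioc a b))) :
    |brokenBilinForm haα hαb lam hβ hβb hw hwb x y| ≤
      (Cβ + Cw * (b - a) ^ 2 + (b - a) / lam) * ‖x‖ * ‖y‖ :=
  LinearMap.BilinForm.abs_apply_le_of_isSymm _ ⟨fun _ _ => brokenForm_comm⟩
    (fun x => by simpa only [zero_mul] using le_brokenBilinForm_apply_self haα hαb hβ hβb hw hwb hβ0 hw0 hlam x)
    (brokenBilinForm_apply_self_le haα hαb hβ hβb hw hwb hlam) x y

lemma MemBrokenH10.brokenForm_eq_brokenBilinForm (hu : MemBrokenH10 a α b u u')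
    (hv : MemBrokenH10 a α b v v') :
    brokenForm a α b lam β w u u' v v' =
      brokenBilinForm haα hαb lam hβ hβb hw hwb ((hu.memLp_deriv haα hαb).toLp u')
        ((hv.memLp_deriv haα hαb).toLp v') := by
  have hcoe : ∀ {v v'}, MemBrokenH10 a α b v v' →
      ∀ hv' : MemLp v' 2 (volume.restrict (Ioc a b)),
        v =ᵐ[volume.restrict (Ioc a b)] brokenPrimitive a α b (hv'.toLp v') := fun hv hv' =>
    hv.ae_eq_of_ae_eq_deriv (memBrokenH10_brokenPrimitive haα hαb (Lp.memLp _))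
      hv'.coeFn_toLp.symm
  exact brokenForm_congr_ae haα hαb (hcoe hu _) (MemLp.coeFn_toLp _).symm (hcoe hv _)
    (MemLp.coeFn_toLp _).symm

lemma MemBrokenH10.forall_brokenForm_eq_iff (hu : MemBrokenH10 a α b u u') :
    (∀ v v', MemBrokenH10 a α b v v' →
        brokenForm a α b lam β w u u' v v' = ∫ x in a..b, f x * v x) ↔
      ∀ y, brokenBilinForm haα hαb lam hβ hβb hw hwb ((hu.memLp_deriv haα hαb).toLp u') y =
        ∫ t in a..b, f t * brokenPrimitive a α b y t := by
  constructor
  · intro h y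
    have hy := memBrokenH10_brokenPrimitive haα hαb (Lp.memLp y)
    rw [← h _ _ hy, hu.brokenForm_eq_brokenBilinForm haα hαb hβ hβb hw hwb hy, Lp.toLp_coeFn]
  · intro h v v' hv
    rw [hu.brokenForm_eq_brokenBilinForm haα hαb hβ hβb hw hwb hv, h]
    refine intervalIntegral_congr_ae_restrict (haα.trans hαb) subset_rfl ?_
    filter_upwards [(memBrokenH10_brokenPrimitive haα hαb (Lp.memLp _)).ae_eq_of_ae_eq_deriv hv
      (hv.memLp_deriv haα hαb).coeFn_toLp] with x hx
    rw [hx]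

theorem existsUnique_brokenBilinForm_eq {βs : ℝ} (hβs0 : 0 < βs) (hβs : ∀ x, βs ≤ β x)
    (hw0 : ∀ x, 0 ≤ w x) (hlam : 0 ≤ lam) (hf : MemLp f 2 (volume.restrict (Ioc a b))) :
    ∃! x, ∀ y, brokenBilinForm haα hαb lam hβ hβb hw hwb x y =
      ∫ t in a..b, f t * brokenPrimitive a α b y t := by
  have hab := haα.trans hαb
  have hfP : ∀ y : Lp ℝ 2 (volume.restrict (Ioc a b)),
      IntervalIntegrable (fun t => f t * brokenPrimitive a α b y t) volume a b := fun y =>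
    (intervalIntegrable_iff_integrableOn_Ioc_of_le hab).2 (hf.integrable_mul
      ((memBrokenH10_brokenPrimitive haα hαb (Lp.memLp y)).memLp haα hαb))
  let ℓ : Lp ℝ 2 (volume.restrict (Ioc a b)) →L[ℝ] ℝ := LinearMap.mkContinuous
    { toFun y := ∫ t in a..b, f t * brokenPrimitive a α b y t
      map_add' x y := by
        rw [← integral_add (hfP x) (hfP y)]
        refine intervalIntegral_congr_ae_restrict hab subset_rfl ?_
        filter_upwards [brokenPrimitive_coeFn_add haα hαb x y] with t ht
        rw [ht, Pi.add_apply, mul_add]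
      map_smul' c x := by
        rw [RingHom.id_apply, smul_eq_mul, ← intervalIntegral.integral_const_mul]
        refine intervalIntegral_congr_ae_restrict hab subset_rfl ?_
        filter_upwards [brokenPrimitive_coeFn_smul haα hαb c x] with t ht
        rw [ht, Pi.smul_apply, smul_eq_mul, mul_left_comm] }
    _ (abs_integral_mul_brokenPrimitive_le haα hαb hf)
  exact LinearMap.BilinForm.existsUnique_apply_eq_of_coercive _ hβs0
    (le_brokenBilinForm_apply_self haα hαb hβ hβb hw hwb hβs hw0 hlam)
    (abs_brokenBilinForm_le haα hαb hβ hβb hw hwb (fun x => hβs0.le.trans (hβs x)) hw0 hlam) ℓ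

end BrokenBilinForm

lemma MemBrokenH10.abs_brokenForm_le {a α b lam Cβ Cw : ℝ} {β w u u' v v' : ℝ → ℝ}
    (haα : a ≤ α) (hαb : α ≤ b) (hβ : Measurable β) (hβb : ∀ x, |β x| ≤ Cβ) (hw : Measurable w)
    (hwb : ∀ x, |w x| ≤ Cw) (hβ0 : ∀ x, 0 ≤ β x) (hw0 : ∀ x, 0 ≤ w x) (hlam : 0 ≤ lam)
    (hu : MemBrokenH10 a α b u u') (hv : MemBrokenH10 a α b v v') :
    |brokenForm a α b lam β w u u' v v'| ≤ (Cβ + Cw * (b - a) ^ 2 + (b - a) / lam) *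
      √(brokenNormSq a α b u u') * √(brokenNormSq a α b v v') := by
  have hM : 0 ≤ Cβ + Cw * (b - a) ^ 2 + (b - a) / lam := by
    have := (abs_nonneg _).trans (hβb 0)
    have := (abs_nonneg _).trans (hwb 0)
    have : 0 ≤ b - a := by linarith
    positivity
  rw [hu.brokenForm_eq_brokenBilinForm haα hαb hβ hβb hw hwb hv]
  refine (abs_brokenBilinForm_le haα hαb hβ hβb hw hwb hβ0 hw0 hlam _ _).trans ?_
  gcongr
  exacts [hu.norm_toLp_deriv_le haα hαb, hv.norm_toLp_deriv_le haα hαb]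

theorem stmt_9 (a α b lam βs βt : ℝ) (h1 : a < α) (h2 : α < b)
    (β w : ℝ → ℝ) (hβmeas : Measurable β) (hβs : 0 < βs)
    (hβ : ∀ x, βs ≤ β x ∧ β x ≤ βt)
    (hwmeas : Measurable w) (hw0 : ∀ x, 0 ≤ w x)
    (Cw : ℝ) (hwb : ∀ x, w x ≤ Cw)
    (hlam : 0 < lam) :
    -- boundedness of the bilinear form on H
    (∃ M : ℝ, ∀ u u' v v' : ℝ → ℝ, MemBrokenH10 a α b u u' →
        MemBrokenH10 a α b v v' →
        |brokenForm a α b lam β w u u' v v'| ≤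
          M * Real.sqrt (brokenNormSq a α b u u') * Real.sqrt (brokenNormSq a α b v v')) ∧
    -- coercivity of the bilinear form on H
    (∃ c : ℝ, 0 < c ∧ ∀ v v' : ℝ → ℝ, MemBrokenH10 a α b v v' →
        brokenForm a α b lam β w v v' v v' ≥ c * brokenNormSq a α b v v') ∧
    -- existence and uniqueness of the weak solution for every f ∈ L²
    (∀ f : ℝ → ℝ, MemLp f 2 (volume.restrict (Ioo a b)) →
      ∃ u u' : ℝ → ℝ, MemBrokenH10 a α b u u' ∧
        (∀ v v' : ℝ → ℝ, MemBrokenH10 a α b v v' →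
          brokenForm a α b lam β w u u' v v' = ∫ x in a..b, f x * v x) ∧
        ∀ u₂ u₂' : ℝ → ℝ, MemBrokenH10 a α b u₂ u₂' →
          (∀ v v' : ℝ → ℝ, MemBrokenH10 a α b v v' →
            brokenForm a α b lam β w u₂ u₂' v v' = ∫ x in a..b, f x * v x) →
          ∀ x ∈ Icc a b, x ≠ α → u₂ x = u x) := by
  have haα := h1.le
  have hαb := h2.le
  have hβlow : ∀ x, βs ≤ β x := fun x => (hβ x).1
  have hβabs : ∀ x, |β x| ≤ βt := fun x => abs_le.2 ⟨by linarith [hβ x], (hβ x).2⟩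
  have hwabs : ∀ x, |w x| ≤ Cw := fun x => abs_le.2 ⟨by linarith [hw0 x, hwb x], hwb x⟩
  refine ⟨⟨_, fun u u' v v' hu hv => hu.abs_brokenForm_le haα hαb hβmeas hβabs hwmeas hwabs
      (fun x => hβs.le.trans (hβlow x)) hw0 hlam.le hv⟩,
    ⟨_, by positivity, fun v v' hv => hv.mul_brokenNormSq_le_brokenForm haα hαb hβmeas hβabs
      hβs.le hβlow hw0 hlam.le⟩, fun f hf => ?_⟩
  rw [Measure.restrict_congr_set Ioo_ae_eq_Ioc] at hf
  obtain ⟨x₀, hx₀, huniq⟩ :=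
    existsUnique_brokenBilinForm_eq haα hαb hβmeas hβabs hwmeas hwabs hβs hβlow hw0 hlam.le hf
  have hu := memBrokenH10_brokenPrimitive haα hαb (Lp.memLp x₀)
  refine ⟨_, _, hu, (hu.forall_brokenForm_eq_iff haα hαb hβmeas hβabs hwmeas hwabs).2
    (by simpa only [Lp.toLp_coeFn] using hx₀), fun u₂ u₂' hu₂ hsol₂ x hx hxα => ?_⟩
  refine hu₂.eq_of_ae_eq_deriv hu ?_ hx hxα
  rw [← huniq _ ((hu₂.forall_brokenForm_eq_iff haα hαb hβmeas hβabs hwmeas hwabs).1 hsol₂)]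
  exact (MemLp.coeFn_toLp _).symm
end

section
/- (Piecewise Poincaré inequality with jump control) Let a < α < b and let v ∈ L^2(a,b) be such that v restricted to (a,α) is in H^1(a,α), v restricted to (α,b) is in H^1(α,b), and v(a) = v(b) = 0. Then there exists a constant C depending only on a, b such that ‖v‖_{L^2(a,b)}^2 ≤ C ( ‖v'‖_{L^2(a,α)}^2 + ‖v'‖_{L^2(α,b)}^2 + [v]_α^2 ), where [v]_α = v(α+) - v(α-) is the jump of the one-sided trace values at α. -/
/-!
On each side of `α` the function is a primitive of `v'` vanishing at the outer endpoint, so by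
Cauchy–Schwarz `v(x)² ≤ (b - a) ∫ v'²` pointwise on that side; integrating gives
`‖v‖² ≤ (b - a)² (‖v'‖²_{(a,α)} + ‖v'‖²_{(α,b)})`.
-/

open Set MeasureTheory intervalIntegral

namespace intervalIntegral

variable {f : ℝ → ℝ} {p q : ℝ}

theorem sq_integral_le_mul_integral_sq (hpq : p ≤ q) (hf : IntervalIntegrable f volume p q)
    (hf2 : IntervalIntegrable (fun x => f x ^ 2) volume p q) :
    (∫ x in p..q, f x) ^ 2 ≤ (q - p) * ∫ x in p..q, f x ^ 2 := by
  rcases hpq.eq_or_lt with rfl | hlt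
  · simp
  have hexpand : ∀ s c : ℝ, ∫ x in p..q, (s * f x - c) ^ 2 =
      s ^ 2 * (∫ x in p..q, f x ^ 2) - 2 * s * c * (∫ x in p..q, f x) + c ^ 2 * (q - p) := by
    intro s c
    have hsq : ∀ x, (s * f x - c) ^ 2 = s ^ 2 * f x ^ 2 - 2 * s * c * f x + c ^ 2 :=
      fun x => by ring
    simp_rw [hsq]
    rw [integral_add ((hf2.const_mul _).sub (hf.const_mul _)) intervalIntegrable_const,
      integral_sub (hf2.const_mul _) (hf.const_mul _), integral_const_mul, integral_const_mul,
      integral_const, smul_eq_mul]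
    ring
  have hnonneg := hexpand (q - p) (∫ x in p..q, f x) ▸
    integral_nonneg hlt.le fun x _ => sq_nonneg ((q - p) * f x - ∫ x in p..q, f x)
  nlinarith [sub_pos.2 hlt]

theorem sq_integral_le_of_subset {c d : ℝ} (hpc : p ≤ c) (hcd : c ≤ d) (hdq : d ≤ q)
    (hf : IntervalIntegrable f volume p q)
    (hf2 : IntervalIntegrable (fun x => f x ^ 2) volume p q) :
    (∫ x in c..d, f x) ^ 2 ≤ (q - p) * ∫ x in p..q, f x ^ 2 := by
  have hsub : uIcc c d ⊆ uIcc p q := by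
    rw [uIcc_of_le hcd, uIcc_of_le (hpc.trans (hcd.trans hdq))]
    exact Icc_subset_Icc hpc hdq
  calc (∫ x in c..d, f x) ^ 2 ≤ (d - c) * ∫ x in c..d, f x ^ 2 :=
        sq_integral_le_mul_integral_sq hcd (hf.mono_set hsub) (hf2.mono_set hsub)
    _ ≤ (q - p) * ∫ x in p..q, f x ^ 2 := by
        refine mul_le_mul (by linarith) ?_ (integral_nonneg hcd fun x _ => sq_nonneg _)
          (by linarith)
        exact integral_mono_interval hpc hcd hdq
          (Filter.Eventually.of_forall fun x => sq_nonneg _) hf2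

theorem integral_sq_primitive_le (hpq : p ≤ q) (hf : IntervalIntegrable f volume p q)
    (hf2 : IntervalIntegrable (fun x => f x ^ 2) volume p q) :
    ∫ x in p..q, (∫ t in p..x, f t) ^ 2 ≤ (q - p) ^ 2 * ∫ x in p..q, f x ^ 2 := by
  have hbound := norm_integral_le_of_norm_le_const (a := p) (b := q)
    (f := fun x => (∫ t in p..x, f t) ^ 2) fun x hx => by
      rw [uIoc_of_le hpq] at hx
      rw [Real.norm_of_nonneg (sq_nonneg _)]
      exact sq_integral_le_of_subset le_rfl hx.1.le hx.2 hf hf2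
  rw [abs_of_nonneg (sub_nonneg.2 hpq)] at hbound
  calc _ ≤ _ := (Real.le_norm_self _).trans hbound
    _ = _ := by ring

theorem integral_sq_primitive_right_le (hpq : p ≤ q) (hf : IntervalIntegrable f volume p q)
    (hf2 : IntervalIntegrable (fun x => f x ^ 2) volume p q) :
    ∫ x in p..q, (∫ t in x..q, f t) ^ 2 ≤ (q - p) ^ 2 * ∫ x in p..q, f x ^ 2 := by
  have hbound := norm_integral_le_of_norm_le_const (a := p) (b := q)
    (f := fun x => (∫ t in x..q, f t) ^ 2) fun x hx => by
      rw [uIoc_of_le hpq] at hx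
      rw [Real.norm_of_nonneg (sq_nonneg _)]
      exact sq_integral_le_of_subset hx.1.le hx.2 le_rfl hf hf2
  rw [abs_of_nonneg (sub_nonneg.2 hpq)] at hbound
  calc _ ≤ _ := (Real.le_norm_self _).trans hbound
    _ = _ := by ring

end intervalIntegral

theorem stmt_10_general (a b : ℝ) :
    ∃ C : ℝ, ∀ α ∈ Ioo a b, ∀ v v' : ℝ → ℝ,
      IntervalIntegrable v' volume a α →
      IntervalIntegrable v' volume α b →
      IntervalIntegrable (fun x => (v' x)^2) volume a α →
      IntervalIntegrable (fun x => (v' x)^2) volume α b →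
      (∀ x ∈ Ico a α, v x = ∫ t in a..x, v' t) →
      (∀ x ∈ Ioc α b, v x = -∫ t in x..b, v' t) →
      (∫ x in a..b, (v x)^2) ≤
        C * ((∫ x in a..α, (v' x)^2) + (∫ x in α..b, (v' x)^2) +
          ((-∫ t in α..b, v' t) - ∫ t in a..α, v' t)^2) := by
  refine ⟨(b - a) ^ 2, ?_⟩
  rintro α ⟨haα, hαb⟩ v v' hi₁ hi₂ hs₁ hs₂ hv₁ hv₂
  have heq₁ : EqOn (fun x => (∫ t in a..x, v' t) ^ 2) (fun x => v x ^ 2) (Ioo a α) :=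
    fun x hx => by simp only [hv₁ x (Ioo_subset_Ico_self hx)]
  have heq₂ : EqOn (fun x => (∫ t in x..b, v' t) ^ 2) (fun x => v x ^ 2) (Ioo α b) :=
    fun x hx => by simp only [hv₂ x (Ioo_subset_Ioc_self hx), neg_sq]
  have hint₁ : IntervalIntegrable (fun x => v x ^ 2) volume a α :=
    ((continuousOn_primitive_interval' hi₁ left_mem_uIcc).pow 2).intervalIntegrable.congr_uIoo
      (uIoo_of_le haα.le ▸ heq₁)
  have hint₂ : IntervalIntegrable (fun x => v x ^ 2) volume α b :=
    ((continuousOn_primitive_interval_left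
      ((intervalIntegrable_iff' (f := v') (μ := volume)).1 hi₂)).pow 2).intervalIntegrable
      |>.congr_uIoo (uIoo_of_le hαb.le ▸ heq₂)
  have hL : ∫ x in a..α, v x ^ 2 ≤ (α - a) ^ 2 * ∫ x in a..α, v' x ^ 2 := by
    rw [← integral_congr_Ioo_of_le haα.le heq₁]
    exact integral_sq_primitive_le haα.le hi₁ hs₁
  have hR : ∫ x in α..b, v x ^ 2 ≤ (b - α) ^ 2 * ∫ x in α..b, v' x ^ 2 := by
    rw [← integral_congr_Ioo_of_le hαb.le heq₂]
    exact integral_sq_primitive_right_le hαb.le hi₂ hs₂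
  have hE₁ : 0 ≤ ∫ x in a..α, v' x ^ 2 := integral_nonneg haα.le fun x _ => sq_nonneg _
  have hE₂ : 0 ≤ ∫ x in α..b, v' x ^ 2 := integral_nonneg hαb.le fun x _ => sq_nonneg _
  have hC₁ : (α - a) ^ 2 ≤ (b - a) ^ 2 := by gcongr
  have hC₂ : (b - α) ^ 2 ≤ (b - a) ^ 2 := by gcongr
  rw [← integral_add_adjacent_intervals hint₁ hint₂]
  linarith [mul_le_mul_of_nonneg_right hC₁ hE₁, mul_le_mul_of_nonneg_right hC₂ hE₂,
    mul_nonneg (sq_nonneg (b - a)) (sq_nonneg ((-∫ t in α..b, v' t) - ∫ t in a..α, v' t))]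

/-- Piecewise Poincaré inequality with jump control: there is a constant `C`
depending only on `a, b` such that for every interface point `α ∈ (a,b)` and every
function `v` that is `H¹` on each of `(a,α)`, `(α,b)` (with weak derivative `v'`,
encoded by the fundamental theorem of calculus representations) and vanishes at
`a` and `b`, one has `‖v‖²_{L²} ≤ C (‖v'‖²_{L²(a,α)} + ‖v'‖²_{L²(α,b)} + [v]_α²)`. -/
theorem stmt_10 (a b : ℝ) (hab : a < b) :
    ∃ C : ℝ, ∀ α ∈ Ioo a b, ∀ v v' : ℝ → ℝ,
      IntervalIntegrable v' volume a α →
      IntervalIntegrable v' volume α b →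
      IntervalIntegrable (fun x => (v' x)^2) volume a α →
      IntervalIntegrable (fun x => (v' x)^2) volume α b →
      (∀ x ∈ Ico a α, v x = ∫ t in a..x, v' t) →
      (∀ x ∈ Ioc α b, v x = -∫ t in x..b, v' t) →
      (∫ x in a..b, (v x)^2) ≤
        C * ((∫ x in a..α, (v' x)^2) + (∫ x in α..b, (v' x)^2) +
          ((-∫ t in α..b, v' t) - ∫ t in a..α, v' t)^2) :=
  stmt_10_general a b
end
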